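/- Let k be a field, R = k[x_0,…,x_n], let A be a finite set of nonzero, pairwise non-proportional linear forms of R, and let P be a prime ideal of R. Let A_X = {ℓ ∈ A : ℓ ∈ P}. Then the extensions of the singular-locus ideals to the localization R_P coincide: J(A)·R_P = J(A_X)·R_P. -/

import Mathlib

open MvPolynomial

/-- The singular-locus ideal of a hyperplane arrangement given by a set `A` of linear
forms: the intersection over all unordered pairs of distinct forms of the ideals
generated by the two forms (the empty intersection being the unit ideal). -/
noncomputable def singIdeal {R : Type*} [CommRing R] (A : Set R) : Ideal R :=
  ⨅ (ℓ : R) (_ : ℓ ∈ A) (ℓ' : R) (_ : ℓ' ∈ A) (_ : ℓ ≠ ℓ'), Ideal.span {ℓ, ℓ'}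

/-!
Let `t` be the product of the forms of `A` outside `P`. A pair of distinct forms of `A` either
lies in `A_X`, or one of its members divides `t`; hence `t • J(A_X) ⊆ J(A)`, and since `t` is
inverted in `R_P`, the two ideals have the same extension.
-/

section

variable {R : Type*} [CommRing R]

theorem mem_singIdeal {A : Set R} {x : R} :
    x ∈ singIdeal A ↔ ∀ ℓ ∈ A, ∀ ℓ' ∈ A, ℓ ≠ ℓ' → x ∈ Ideal.span {ℓ, ℓ'} := by
  simp only [singIdeal, Ideal.mem_iInf]

theorem singIdeal_anti {A B : Set R} (hAB : A ⊆ B) : singIdeal B ≤ singIdeal A :=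
  fun _ hx => mem_singIdeal.2 fun ℓ hℓ ℓ' hℓ' hne => mem_singIdeal.1 hx ℓ (hAB hℓ) ℓ' (hAB hℓ') hne

theorem prod_mul_mem_singIdeal {A T : Set R} (s : Finset R) (hs : ∀ ℓ ∈ A, ℓ ∉ T → ℓ ∈ s)
    {a : R} (ha : a ∈ singIdeal {ℓ ∈ A | ℓ ∈ T}) : (∏ ℓ ∈ s, ℓ) * a ∈ singIdeal A := by
  have dvd_of_notMem {ℓ : R} (hℓ : ℓ ∈ A) (hT : ℓ ∉ T) : ℓ ∣ (∏ ℓ ∈ s, ℓ) * a :=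
    dvd_mul_of_dvd_left (Finset.dvd_prod_of_mem _ (hs ℓ hℓ hT)) a
  refine mem_singIdeal.2 fun ℓ hℓ ℓ' hℓ' hne => ?_
  by_cases h : ℓ ∈ T
  · by_cases h' : ℓ' ∈ T
    · exact Ideal.mul_mem_left _ _ (mem_singIdeal.1 ha ℓ ⟨hℓ, h⟩ ℓ' ⟨hℓ', h'⟩ hne)
    · exact Ideal.mem_of_dvd _ (dvd_of_notMem hℓ' h') (Ideal.subset_span (by simp))
  · exact Ideal.mem_of_dvd _ (dvd_of_notMem hℓ h) (Ideal.subset_span (by simp))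

theorem map_singIdeal_eq_map_singIdeal_sep {L : Type*} [CommRing L] [Algebra R L]
    (S : Submonoid R) [IsLocalization S L] {A T : Set R} (hA : A.Finite)
    (hS : ∀ ℓ ∈ A, ℓ ∉ T → ℓ ∈ S) :
    (singIdeal A).map (algebraMap R L) = (singIdeal {ℓ ∈ A | ℓ ∈ T}).map (algebraMap R L) := by
  refine le_antisymm (Ideal.map_mono (singIdeal_anti fun _ hℓ => hℓ.1)) ?_
  classical
  rw [Ideal.map_le_iff_le_comap]
  intro a ha
  rw [Ideal.mem_comap]
  set t := ∏ ℓ ∈ hA.toFinset.filter (· ∉ T), ℓ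
  have ht : t ∈ S := Submonoid.prod_mem _ fun ℓ hℓ => by
    rw [Finset.mem_filter, Set.Finite.mem_toFinset] at hℓ
    exact hS ℓ hℓ.1 hℓ.2
  have hta : t * a ∈ singIdeal A :=
    prod_mul_mem_singIdeal _ (fun ℓ hℓ hT => by simpa using ⟨hℓ, hT⟩) ha
  refine (Ideal.unit_mul_mem_iff_mem _ (IsLocalization.map_units L ⟨t, ht⟩)).1 ?_
  rw [← map_mul]
  exact Ideal.mem_map_of_mem _ hta

end

theorem stmt15_general {k : Type*} [Field k] (n : ℕ)
    (A : Set (MvPolynomial (Fin (n + 1)) k)) (hAfin : A.Finite)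
    (P : Ideal (MvPolynomial (Fin (n + 1)) k)) [P.IsPrime] :
    Ideal.map (algebraMap (MvPolynomial (Fin (n + 1)) k) (Localization.AtPrime P))
        (singIdeal A) =
      Ideal.map (algebraMap (MvPolynomial (Fin (n + 1)) k) (Localization.AtPrime P))
        (singIdeal {ℓ ∈ A | ℓ ∈ P}) :=
  map_singIdeal_eq_map_singIdeal_sep P.primeCompl hAfin fun _ _ hℓ => hℓ

theorem stmt15 {k : Type*} [Field k] (n : ℕ)
    (A : Set (MvPolynomial (Fin (n + 1)) k)) (hAfin : A.Finite)
    (h : ∀ ℓ ∈ A, ℓ ≠ 0 ∧ ℓ.IsHomogeneous 1)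
    (hp : ∀ ℓ ∈ A, ∀ ℓ' ∈ A, ℓ ≠ ℓ' → ∀ c : k, ℓ ≠ c • ℓ')
    (P : Ideal (MvPolynomial (Fin (n + 1)) k)) [P.IsPrime] :
    Ideal.map (algebraMap (MvPolynomial (Fin (n + 1)) k) (Localization.AtPrime P))
        (singIdeal A) =
      Ideal.map (algebraMap (MvPolynomial (Fin (n + 1)) k) (Localization.AtPrime P))
        (singIdeal {ℓ ∈ A | ℓ ∈ P}) :=
  stmt15_general n A hAfin P
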